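/- arXiv:1402.3842 — 2 statements merged into one kernel-verified Lean document; each statement's English description precedes it below -/
import Mathlib

section
/- A simple permutation avoids all three of the patterns 2143, 3142, and 246135 if and only if it avoids all three of the patterns 2143, 3142, and 3412. Equivalently, the set of simple permutations in the class Av(2143, 3142, 246135) equals the set of simple permutations in the class Av(2143, 3142, 3412). -/
/-- `π` contains the pattern `σ`: there is a strictly increasing choice of positions
on which `π` is order-isomorphic to `σ`. -/
def Contains {n k : ℕ} (π : Equiv.Perm (Fin n)) (σ : Equiv.Perm (Fin k)) : Prop :=
  ∃ f : Fin k → Fin n, StrictMono f ∧ ∀ a b : Fin k, σ a < σ b ↔ π (f a) < π (f b)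

/-- `π` avoids the pattern `σ`. -/
def Avoids {n k : ℕ} (π : Equiv.Perm (Fin n)) (σ : Equiv.Perm (Fin k)) : Prop :=
  ¬ Contains π σ

/-- A permutation of length `n` is simple if it has no interval (a contiguous set of
positions whose image is a contiguous set of values) other than those of size 1 and `n`. -/
def IsSimple {n : ℕ} (π : Equiv.Perm (Fin n)) : Prop :=
  ∀ i j : Fin n, i ≤ j →
    (∃ l u : Fin n, (Finset.Icc i j).image π = Finset.Icc l u) →
    i = j ∨ ((i : ℕ) = 0 ∧ (j : ℕ) = n - 1)

noncomputable def p2143 : Equiv.Perm (Fin 4) := Equiv.ofBijective ![1, 0, 3, 2] (by decide)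
noncomputable def p3142 : Equiv.Perm (Fin 4) := Equiv.ofBijective ![2, 0, 3, 1] (by decide)
noncomputable def p246135 : Equiv.Perm (Fin 6) := Equiv.ofBijective ![1, 3, 5, 0, 2, 4] (by decide)
noncomputable def p3412 : Equiv.Perm (Fin 4) := Equiv.ofBijective ![2, 3, 0, 1] (by decide)

/-!
Only "3412 implies 246135" needs an argument, for a simple `π` avoiding 3142. Take an occurrence
`(a, b, c, d)` of 3412 with `π c` least. It has a point `e` left of `a` valued between `π c` and
`π d`: otherwise, starting from the leftmost point `i` valued in `[π c, π d]`, the window `[i, d]`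
could be enlarged to the right forever. No point left of `i` splits the values of the window, so
by simplicity some point right of it does; absorbing that point keeps the left side from splitting,
since otherwise 3142 or an occurrence of 3412 with smaller third value appears. Among occurrences
admitting such an `e`, one with `π b` greatest likewise has a point `f` right of `d` valued between
`π a` and `π b`, now by growing a window `[a, i]` to the left, and `e a b c d f` is 246135.
-/

open Finset

variable {n k m : ℕ}

theorem Contains.trans {π : Equiv.Perm (Fin n)} {σ : Equiv.Perm (Fin k)}
    {τ : Equiv.Perm (Fin m)} (h₁ : Contains π σ) (h₂ : Contains σ τ) : Contains π τ := by
  obtain ⟨f, hf, hfπ⟩ := h₁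
  obtain ⟨g, hg, hgσ⟩ := h₂
  exact ⟨f ∘ g, hf.comp hg, fun a b => (hgσ a b).trans (hfπ _ _)⟩

theorem contains_of_strictMono {π : Equiv.Perm (Fin n)} {σ : Equiv.Perm (Fin k)}
    (τ : Fin k → Fin k) (hτ : ∀ v, σ (τ v) = v) (f : Fin k → Fin n) (hf : StrictMono f)
    (hval : StrictMono (π ∘ f ∘ τ)) : Contains π σ := by
  have hτσ : ∀ a, τ (σ a) = a := fun a => σ.injective (hτ (σ a))
  refine ⟨f, hf, fun a b => ?_⟩
  simpa [hτσ] using hval.lt_iff_lt (a := σ a) (b := σ b) |>.symm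

theorem contains_p246135_p3412 : Contains p246135 p3412 := by
  refine contains_of_strictMono ![2, 3, 0, 1] ?_ ![1, 2, 3, 4]
    (Fin.strictMono_iff_lt_succ.2 ?_) (Fin.strictMono_iff_lt_succ.2 ?_) <;> decide

theorem contains_p3142_of {π : Equiv.Perm (Fin n)} {a b c d : Fin n}
    (hab : a < b) (hbc : b < c) (hcd : c < d)
    (h₁ : π b < π d) (h₂ : π d < π a) (h₃ : π a < π c) : Contains π p3142 :=
  contains_of_strictMono ![1, 3, 0, 2] (by decide) ![a, b, c, d]
    (Fin.strictMono_iff_lt_succ.2 fun i => by fin_cases i <;> simpa)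
    (Fin.strictMono_iff_lt_succ.2 fun i => by fin_cases i <;> simpa)

theorem contains_p246135_of {π : Equiv.Perm (Fin n)} {a b c d e f : Fin n}
    (hab : a < b) (hbc : b < c) (hcd : c < d) (hde : d < e) (hef : e < f)
    (h₁ : π d < π a) (h₂ : π a < π e) (h₃ : π e < π b) (h₄ : π b < π f) (h₅ : π f < π c) :
    Contains π p246135 :=
  contains_of_strictMono ![3, 0, 4, 1, 5, 2] (by decide) ![a, b, c, d, e, f]
    (Fin.strictMono_iff_lt_succ.2 fun i => by fin_cases i <;> simpa)
    (Fin.strictMono_iff_lt_succ.2 fun i => by fin_cases i <;> simpa)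

def Is3412 (π : Equiv.Perm (Fin n)) (a b c d : Fin n) : Prop :=
  a < b ∧ b < c ∧ c < d ∧ π c < π d ∧ π d < π a ∧ π a < π b

theorem exists_is3412_of_contains {π : Equiv.Perm (Fin n)} (h : Contains π p3412) :
    ∃ a b c d, Is3412 π a b c d := by
  obtain ⟨f, hf, hσ⟩ := h
  exact ⟨f 0, f 1, f 2, f 3, hf (by decide), hf (by decide), hf (by decide),
    (hσ 2 3).1 (by decide), (hσ 3 0).1 (by decide), (hσ 0 1).1 (by decide)⟩

def Splits (π : Equiv.Perm (Fin n)) (s : Finset (Fin n)) (z : Fin n) : Prop :=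
  (∃ x ∈ s, π x < π z) ∧ ∃ x ∈ s, π z < π x

theorem IsSimple.exists_splits {π : Equiv.Perm (Fin n)} (hπ : IsSimple π) {i j : Fin n}
    (hij : i < j) (hproper : (i : ℕ) ≠ 0 ∨ (j : ℕ) ≠ n - 1) :
    ∃ z ∉ Icc i j, Splits π (Icc i j) z := by
  by_contra hsplit
  set s := (Icc i j).image π
  have hs : s.Nonempty := (nonempty_Icc.2 hij.le).image π
  obtain ⟨x, hx, hxmin⟩ := mem_image.1 (s.min'_mem hs)
  obtain ⟨x', hx', hxmax⟩ := mem_image.1 (s.max'_mem hs)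
  have hinterval : s = Icc (s.min' hs) (s.max' hs) := by
    refine Subset.antisymm (fun v hv => mem_Icc.2 ⟨s.min'_le v hv, s.le_max' v hv⟩) ?_
    intro v hv
    by_contra hvs
    have hz : π.symm v ∉ Icc i j := fun h => hvs (π.apply_symm_apply v ▸ mem_image_of_mem π h)
    obtain ⟨hlv, hvu⟩ := mem_Icc.1 hv
    have hne : ∀ w ∈ s, w ≠ v := fun w hw hwv => hvs (hwv ▸ hw)
    refine hsplit ⟨_, hz, ⟨x, hx, ?_⟩, x', hx', ?_⟩ <;> rw [π.apply_symm_apply]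
    · exact hxmin ▸ lt_of_le_of_ne hlv (hne _ (s.min'_mem hs))
    · exact hxmax ▸ lt_of_le_of_ne hvu (hne _ (s.max'_mem hs)).symm
  rcases hπ i j hij.le ⟨_, _, hinterval⟩ with h | h
  · exact hij.ne h
  · omega

section LeftExtension

variable {π : Equiv.Perm (Fin n)} {a b c d : Fin n}

theorem Is3412.le_apply_of_min_third (hocc : Is3412 π a b c d)
    (hmin : ∀ a' b' c' d', Is3412 π a' b' c' d' → π c ≤ π c') {x : Fin n}
    (hbx : b < x) (hxd : x ≤ d) : π c ≤ π x := by
  obtain ⟨hab, hbc, hcd, hcd', hda, hab'⟩ := hocc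
  by_contra! hxc
  rcases lt_or_gt_of_ne (show x ≠ c by rintro rfl; order) with hxc' | hcx
  · exact (hmin a b x c ⟨hab, hbx, hxc', hxc, hcd'.trans hda, hab'⟩).not_gt hxc
  · have hxd' : x < d := lt_of_le_of_ne hxd (by rintro rfl; order)
    exact (hmin a b x d ⟨hab, hbx, hxd', hxc.trans hcd', hda, hab'⟩).not_gt hxc

theorem Is3412.not_splits_Icc_of_min_third (h3142 : Avoids π p3142) (hocc : Is3412 π a b c d)
    (hmin : ∀ a' b' c' d', Is3412 π a' b' c' d' → π c ≤ π c') {i : Fin n}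
    (hleft : ∀ x, π c ≤ π x → π x ≤ π d → i ≤ x) (hbi : b < i) (hic : i ≤ c)
    (hid : π i ≤ π d) : ∀ y < i, ¬Splits π (Icc i d) y := by
  rintro y hyi ⟨⟨x, hx, hxy⟩, x', hx', hyx'⟩
  rw [mem_Icc] at hx hx'
  have hcx := hocc.le_apply_of_min_third hmin (hbi.trans_le hx.1) hx.2
  have hdy : π d < π y := by
    by_contra! hyd
    exact (hleft y (hcx.trans hxy.le) hyd).not_gt hyi
  have hid' : π i < π d := lt_of_le_of_ne hid (π.injective.ne (hic.trans_lt hocc.2.2.1).ne)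
  have hix' : i < x' := lt_of_le_of_ne hx'.1 (by rintro rfl; order)
  have hx'd : x' < d := lt_of_le_of_ne hx'.2 (by rintro rfl; order)
  exact h3142 (contains_p3142_of hyi hix' hx'd hid' hdy hyx')

theorem not_splits_Icc_of_splits_of_min_third (h3142 : Avoids π p3142)
    (hmin : ∀ a' b' c' d', Is3412 π a' b' c' d' → π c ≤ π c') {i j z : Fin n}
    (hab : a < b) (hbi : b < i) (hab' : π a < π b) (hca : π c < π a) (hc : c ∈ Icc i j)
    (hj : ∀ y < i, ¬Splits π (Icc i j) y) (hjz : j < z) (hz : Splits π (Icc i j) z) :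
    ∀ y < i, ¬Splits π (Icc i z) y := by
  obtain ⟨⟨x₁, hx₁, hx₁z⟩, x₂, hx₂, hzx₂⟩ := hz
  have hza : π z < π a := by
    have ha := hj a (hab.trans hbi)
    simp only [Splits, not_and, not_exists, not_lt] at ha
    exact hzx₂.trans_le (ha ⟨c, hc, hca⟩ x₂ hx₂)
  rintro y hyi ⟨⟨x₁', hx₁', hx₁'y⟩, x₂', hx₂', hyx₂'⟩
  have hy := hj y hyi
  simp only [Splits, not_and, not_exists, not_lt] at hy
  rw [mem_Icc] at hx₁ hx₂ hx₁' hx₂' hc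
  by_cases habove : ∃ x ∈ Icc i j, π x < π y
  · have hjx₂' : j < x₂' := lt_of_not_ge fun h =>
      (hy habove x₂' (mem_Icc.2 ⟨hx₂'.1, h⟩)).not_gt hyx₂'
    have hx₂y := hy habove x₂ (mem_Icc.2 hx₂)
    have hx₂'z : x₂' < z := lt_of_le_of_ne hx₂'.2 (by rintro rfl; order)
    exact h3142 (contains_p3142_of (hyi.trans_le hx₁.1) (hx₁.2.trans_lt hjx₂') hx₂'z
      hx₁z (hzx₂.trans_le hx₂y) hyx₂')
  · push Not at habove
    have hjx₁' : j < x₁' := lt_of_not_ge fun h =>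
      (habove x₁' (mem_Icc.2 ⟨hx₁'.1, h⟩)).not_gt hx₁'y
    have hyx₁ := habove x₁ (mem_Icc.2 hx₁)
    have hx₁'z : x₁' < z := lt_of_le_of_ne hx₁'.2 (by rintro rfl; order)
    have hyc := habove c (mem_Icc.2 hc)
    exact (hmin a b x₁' z ⟨hab, hbi.trans (hx₁.1.trans_lt (hx₁.2.trans_lt hjx₁')), hx₁'z,
      hx₁'y.trans (hyx₁.trans_lt hx₁z), hza, hab'⟩).not_gt (hx₁'y.trans_le hyc)

theorem Is3412.exists_left_extension (hπ : IsSimple π) (h3142 : Avoids π p3142)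
    (hocc : Is3412 π a b c d) (hmin : ∀ a' b' c' d', Is3412 π a' b' c' d' → π c ≤ π c') :
    ∃ e < a, π c < π e ∧ π e < π d := by
  by_contra! hno
  have ⟨hab, hbc, hcd, hcd', hda, hab'⟩ := hocc
  obtain ⟨i, ⟨hci, hid⟩, hleft⟩ := Set.exists_min_image {x | π c ≤ π x ∧ π x ≤ π d} id
    (Set.toFinite _) ⟨c, le_rfl, hcd'.le⟩
  have hic : i ≤ c := hleft c ⟨le_rfl, hcd'.le⟩
  have hbi : b < i := by
    by_contra! hib
    have hid' : π i < π d := lt_of_le_of_ne hid (π.injective.ne (by order))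
    rcases lt_trichotomy i a with hia | rfl | hai
    · exact (hno i hia (lt_of_le_of_ne hci (π.injective.ne (by order)))).not_gt hid'
    · order
    · exact h3142 (contains_p3142_of hai (lt_of_le_of_ne hib (by rintro rfl; order))
        (hbc.trans hcd) hid' hda hab')
  obtain ⟨j, ⟨hdj, hj⟩, hjmax⟩ := Set.exists_max_image
    {j | d ≤ j ∧ ∀ y < i, ¬Splits π (Icc i j) y} id (Set.toFinite _)
    ⟨d, le_rfl, hocc.not_splits_Icc_of_min_third h3142 hmin
      (fun x h₁ h₂ => hleft x ⟨h₁, h₂⟩) hbi hic hid⟩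
  obtain ⟨z, hz, hsplit⟩ := hπ.exists_splits (i := i) (j := j) (by order) (Or.inl (by omega))
  have hjz : j < z := by
    simp only [mem_Icc, not_and_or, not_le] at hz
    exact hz.resolve_left fun hzi => hj z hzi hsplit
  exact (hjmax z ⟨by order, not_splits_Icc_of_splits_of_min_third h3142 hmin hab hbi hab'
    (hcd'.trans hda) (mem_Icc.2 ⟨hic, by order⟩) hj hjz hsplit⟩).not_gt hjz

end LeftExtension

section RightExtension

variable {π : Equiv.Perm (Fin n)} {a b c d e : Fin n}

theorem Is3412.lt_apply_Icc (h3142 : Avoids π p3142) (hocc : Is3412 π a b c d) {i : Fin n}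
    (hbi : b ≤ i) (hic : i < c) (hai : π a < π i) : ∀ x ∈ Icc a i, π d < π x := by
  have ⟨hab, hbc, hcd, hcd', hda, hab'⟩ := hocc
  intro x hx
  rw [mem_Icc] at hx
  by_contra! hxd
  have hxd' : π x < π d := lt_of_le_of_ne hxd (π.injective.ne (by order))
  have hax : a < x := lt_of_le_of_ne hx.1 (by rintro rfl; order)
  have hxi : x < i := lt_of_le_of_ne hx.2 (by rintro rfl; order)
  exact h3142 (contains_p3142_of hax hxi (by order) hxd' hda hai)

theorem Is3412.not_splits_Icc_of_max_second (h3142 : Avoids π p3142) (hocc : Is3412 π a b c d)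
    (hea : e < a) (hce : π c < π e) (hed : π e < π d)
    (hmax : ∀ a' b' c' d' e', Is3412 π a' b' c' d' → e' < a' → π c' < π e' → π e' < π d' →
      π b' ≤ π b) {i : Fin n} (hright : ∀ x, π a ≤ π x → π x ≤ π b → x ≤ i)
    (hic : i < c) (hai : π a < π i) : ∀ y > i, ¬Splits π (Icc a i) y := by
  have ⟨hab, hbc, hcd, hcd', hda, hab'⟩ := hocc
  rintro y hiy ⟨⟨x₁, hx₁, hx₁y⟩, x₂, hx₂, hyx₂⟩
  rw [mem_Icc] at hx₁ hx₂
  rcases le_or_gt (π b) (π y) with hby | hyb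
  · have hax₂ : a < x₂ := lt_of_le_of_ne hx₂.1 (by rintro rfl; order)
    exact (hmax a x₂ c d e ⟨hax₂, by order, hcd, hcd', hda, by order⟩ hea hce hed).not_gt
      (by order)
  · have hya : π y < π a := lt_of_not_ge fun h => (hright y h hyb.le).not_gt hiy
    have hax₁ : a < x₁ := lt_of_le_of_ne hx₁.1 (by rintro rfl; order)
    have hx₁i : x₁ < i := lt_of_le_of_ne hx₁.2 (by rintro rfl; order)
    exact h3142 (contains_p3142_of hax₁ hx₁i hiy hx₁y hya hai)

theorem lt_apply_Icc_of_splits (h3142 : Avoids π p3142) {i j z : Fin n} (hid : i < d)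
    (hj : ∀ x ∈ Icc j i, π d < π x) (hz : Splits π (Icc j i) z) :
    ∀ x ∈ Icc z i, π d < π x := by
  obtain ⟨⟨x₁, hx₁, hx₁z⟩, x₂, hx₂, hzx₂⟩ := hz
  have hdz : π d < π z := (hj x₁ hx₁).trans hx₁z
  intro x hx
  rw [mem_Icc] at hx hx₂
  by_cases hjx : j ≤ x
  · exact hj x (mem_Icc.2 ⟨hjx, hx.2⟩)
  rcases hx.1.eq_or_lt with rfl | hzx
  · exact hdz
  by_contra! hxd
  have hxd' : π x < π d := lt_of_le_of_ne hxd (π.injective.ne (by order))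
  exact h3142 (contains_p3142_of hzx (by order) (by order) hxd' hdz hzx₂)

theorem Is3412.not_splits_Icc_of_splits_of_max_second (h3142 : Avoids π p3142)
    (hocc : Is3412 π a b c d)
    (hea : e < a) (hce : π c < π e) (hed : π e < π d)
    (hmax : ∀ a' b' c' d' e', Is3412 π a' b' c' d' → e' < a' → π c' < π e' → π e' < π d' →
      π b' ≤ π b) {i j z : Fin n} (hja : j ≤ a) (hbi : b ≤ i) (hic : i < c)
    (hj : ∀ y > i, ¬Splits π (Icc j i) y) (hzj : z < j) (hz : Splits π (Icc j i) z)
    (hz' : ∀ x ∈ Icc z i, π d < π x) : ∀ y > i, ¬Splits π (Icc z i) y := by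
  have ⟨hab, hbc, hcd, hcd', hda, hab'⟩ := hocc
  obtain ⟨⟨x₁, hx₁, hx₁z⟩, x₂, hx₂, hzx₂⟩ := hz
  have hdz : π d < π z := hz' z (mem_Icc.2 ⟨le_rfl, by order⟩)
  rintro y hiy ⟨⟨x₁', hx₁', hx₁'y⟩, x₂', hx₂', hyx₂'⟩
  have hy := hj y hiy
  simp only [Splits, not_and, not_exists, not_lt] at hy
  rw [mem_Icc] at hx₁ hx₂ hx₁' hx₂'
  by_cases habove : ∃ x ∈ Icc j i, π x < π y
  · have hx₂'j : x₂' < j := lt_of_not_ge fun h =>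
      (hy habove x₂' (mem_Icc.2 ⟨h, hx₂'.2⟩)).not_gt hyx₂'
    have hx₂y := hy habove x₂ (mem_Icc.2 hx₂)
    have hzx₂' : z < x₂' := lt_of_le_of_ne hx₂'.1 (by rintro rfl; order)
    have hez : e < z := lt_of_not_ge fun h => (hz' e (mem_Icc.2 ⟨h, by order⟩)).not_gt hed
    have hby := hy habove b (mem_Icc.2 ⟨by order, hbi⟩)
    exact (hmax z x₂' c d e ⟨hzx₂', by order, hcd, hcd', hdz, by order⟩ hez hce hed).not_gt
      (by order)
  · push Not at habove
    have hx₁'j : x₁' < j := lt_of_not_ge fun h =>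
      (habove x₁' (mem_Icc.2 ⟨h, hx₁'.2⟩)).not_gt hx₁'y
    have hyx₁ := habove x₁ (mem_Icc.2 hx₁)
    have hzx₁' : z < x₁' := lt_of_le_of_ne hx₁'.1 (by rintro rfl; order)
    exact h3142 (contains_p3142_of hzx₁' (by order) (by order) hx₁'y (by order) hzx₂)

theorem Is3412.exists_right_extension (hπ : IsSimple π) (h3142 : Avoids π p3142)
    (hocc : Is3412 π a b c d) (hea : e < a) (hce : π c < π e) (hed : π e < π d)
    (hmax : ∀ a' b' c' d' e', Is3412 π a' b' c' d' → e' < a' → π c' < π e' → π e' < π d' →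
      π b' ≤ π b) :
    ∃ f, d < f ∧ π a < π f ∧ π f < π b := by
  by_contra! hno
  have ⟨hab, hbc, hcd, hcd', hda, hab'⟩ := hocc
  obtain ⟨i, ⟨hai, hib⟩, hright⟩ := Set.exists_max_image {x | π a ≤ π x ∧ π x ≤ π b} id
    (Set.toFinite _) ⟨b, hab'.le, le_rfl⟩
  have hbi : b ≤ i := hright b ⟨hab'.le, le_rfl⟩
  have hai' : π a < π i := lt_of_le_of_ne hai (π.injective.ne (by order))
  have hic : i < c := by
    by_contra! hci
    rcases lt_trichotomy i d with hid | rfl | hdi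
    · exact h3142 (contains_p3142_of (hab.trans hbc) (lt_of_le_of_ne hci (by rintro rfl; order))
        hid hcd' hda hai')
    · order
    · exact (hno i hdi hai').not_gt (lt_of_le_of_ne hib (π.injective.ne (by order)))
  obtain ⟨j, ⟨hja, hj, hj'⟩, hjmin⟩ := Set.exists_min_image
    {j | j ≤ a ∧ (∀ x ∈ Icc j i, π d < π x) ∧ ∀ y > i, ¬Splits π (Icc j i) y} id
    (Set.toFinite _) ⟨a, le_rfl, hocc.lt_apply_Icc h3142 hbi hic hai',
      hocc.not_splits_Icc_of_max_second h3142 hea hce hed hmax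
        (fun x h₁ h₂ => hright x ⟨h₁, h₂⟩) hic hai'⟩
  obtain ⟨z, hz, hsplit⟩ := hπ.exists_splits (i := j) (j := i) (by order) (Or.inr (by omega))
  have hzj : z < j := by
    simp only [mem_Icc, not_and_or, not_le] at hz
    exact hz.resolve_right fun hiz => hj' z hiz hsplit
  have hz' := lt_apply_Icc_of_splits h3142 (hic.trans hcd) hj hsplit
  exact (hjmin z ⟨by order, hz', hocc.not_splits_Icc_of_splits_of_max_second h3142 hea hce hed
    hmax hja hbi hic hj' hzj hsplit hz'⟩).not_gt hzj

end RightExtension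

theorem IsSimple.contains_p246135_of_contains_p3412 {π : Equiv.Perm (Fin n)} (hπ : IsSimple π)
    (h3142 : Avoids π p3142) (h : Contains π p3412) : Contains π p246135 := by
  obtain ⟨a₀, b₀, c₀, d₀, hocc₀⟩ := exists_is3412_of_contains h
  obtain ⟨⟨a₁, b₁, c₁, d₁⟩, hocc₁, hmin⟩ := Set.exists_min_image
    {q : Fin n × Fin n × Fin n × Fin n | Is3412 π q.1 q.2.1 q.2.2.1 q.2.2.2}
    (fun q => π q.2.2.1) (Set.toFinite _) ⟨(a₀, b₀, c₀, d₀), hocc₀⟩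
  obtain ⟨e₁, he₁⟩ := hocc₁.exists_left_extension hπ h3142
    fun a' b' c' d' h' => hmin (a', b', c', d') h'
  obtain ⟨⟨a, b, c, d⟩, ⟨hocc, e, hea, hce, hed⟩, hmax⟩ := Set.exists_max_image
    {q : Fin n × Fin n × Fin n × Fin n | Is3412 π q.1 q.2.1 q.2.2.1 q.2.2.2 ∧
      ∃ e < q.1, π q.2.2.1 < π e ∧ π e < π q.2.2.2}
    (fun q => π q.2.1) (Set.toFinite _) ⟨(a₁, b₁, c₁, d₁), hocc₁, e₁, he₁⟩
  obtain ⟨f, hdf, haf, hfb⟩ := hocc.exists_right_extension hπ h3142 hea hce hed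
    fun a' b' c' d' e' h' he' h₁ h₂ => hmax (a', b', c', d') ⟨h', e', he', h₁, h₂⟩
  obtain ⟨hab, hbc, hcd, -, hda, -⟩ := hocc
  exact contains_p246135_of hea hab hbc hcd hdf hce hed hda haf hfb

theorem simples_of_av_2143_3142_246135_eq_simples_of_av_2143_3142_3412
    (n : ℕ) (π : Equiv.Perm (Fin n)) (hπ : IsSimple π) :
    (Avoids π p2143 ∧ Avoids π p3142 ∧ Avoids π p246135) ↔
      (Avoids π p2143 ∧ Avoids π p3142 ∧ Avoids π p3412) := by
  constructor
  · rintro ⟨h2143, h3142, h246135⟩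
    exact ⟨h2143, h3142, fun h => h246135 (hπ.contains_p246135_of_contains_p3412 h3142 h)⟩
  · rintro ⟨h2143, h3142, h3412⟩
    exact ⟨h2143, h3142, fun h => h3412 (h.trans contains_p246135_p3412)⟩
end

section
/- Every sum decomposable permutation that avoids all three of the patterns 2143, 3142, and 246135 is of the form 1 ⊕ τ or τ ⊕ 1 for some permutation τ; that is, for every sum decomposable permutation π of length n ≥ 2 avoiding 2143, 3142, and 246135, either π(1) = 1 or π(n) = n. -/
/-- A permutation of length `n` is sum decomposable if some proper nonempty prefix of
positions is mapped onto the corresponding set of smallest values. -/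
def SumDecomposable {n : ℕ} (π : Equiv.Perm (Fin n)) : Prop :=
  ∃ i : ℕ, 0 < i ∧ i < n ∧ ∀ j : Fin n, (j : ℕ) < i ↔ (π j : ℕ) < i

/-! If `π = σ ⊕ τ` with both blocks nonempty, `π(1) ≠ 1` and `π(n) ≠ n`, then the positions
`1 < π⁻¹(1)` lie in the `σ` block and `π⁻¹(n) < n` in the `τ` block, and together they carry an
occurrence of `2143`. -/

open Equiv

section

variable {n : ℕ} {π : Perm (Fin n)}

theorem contains_of_strictMono_s6 {k : ℕ} {σ : Perm (Fin k)} (f g : Fin k → Fin n)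
    (hf : StrictMono f) (hg : StrictMono g) (hπ : ∀ a, π (f a) = g (σ a)) : Contains π σ :=
  ⟨f, hf, fun a b => by rw [hπ, hπ, hg.lt_iff_lt]⟩

theorem contains_p2143_of_lt {a b c d : Fin n} (hab : a < b) (hbc : b < c) (hcd : c < d)
    (hba : π b < π a) (had : π a < π d) (hdc : π d < π c) : Contains π p2143 :=
  contains_of_strictMono_s6 ![a, b, c, d] ![π b, π a, π d, π c]
    (((Subsingleton.strictMono (α := Fin 1) _).vecCons hcd).vecCons hbc |>.vecCons hab)
    (((Subsingleton.strictMono (α := Fin 1) _).vecCons hdc).vecCons had |>.vecCons hba)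
    (by intro x; fin_cases x <;> rfl)

theorem apply_lt_apply_of_lt_of_le {i : ℕ} (hi : ∀ j : Fin n, (j : ℕ) < i ↔ (π j : ℕ) < i)
    {j k : Fin n} (hj : (j : ℕ) < i) (hk : i ≤ k) : π j < π k := by
  have hπj : (π j : ℕ) < i := (hi j).1 hj
  have hπk : i ≤ (π k : ℕ) := not_lt.1 fun h => absurd ((hi k).2 h) (not_lt.2 hk)
  exact Fin.lt_def.2 (hπj.trans_le hπk)

theorem SumDecomposable.contains_p2143 (hπ : SumDecomposable π) (hn : 0 < n)
    (hfirst : (π ⟨0, hn⟩ : ℕ) ≠ 0) (hlast : (π ⟨n - 1, Nat.sub_lt hn one_pos⟩ : ℕ) ≠ n - 1) :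
    Contains π p2143 := by
  obtain ⟨i, hi0, hin, hi⟩ := hπ
  set first : Fin n := ⟨0, hn⟩
  set last : Fin n := ⟨n - 1, Nat.sub_lt hn one_pos⟩
  set p := π.symm first
  set q := π.symm last
  have hπp : π p = first := π.apply_symm_apply first
  have hπq : π q = last := π.apply_symm_apply last
  have hp : (p : ℕ) < i := (hi p).2 (by rw [hπp]; exact hi0)
  have hq : i ≤ (q : ℕ) := by
    by_contra h
    have := (hi q).1 (not_le.1 h)
    simp only [hπq, last] at this
    omega
  have hfirst_p : first < p := by
    refine Fin.lt_def.2 (Nat.pos_of_ne_zero fun h => hfirst ?_)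
    rw [show first = p from Fin.ext h.symm, hπp]
  have hq_last : q < last := by
    refine Fin.lt_def.2 (lt_of_le_of_ne (Nat.le_sub_one_of_lt q.isLt) fun h => hlast ?_)
    rw [show last = q from Fin.ext h.symm, hπq]
  refine contains_p2143_of_lt hfirst_p (Fin.lt_def.2 (hp.trans_le hq)) hq_last ?_ ?_ ?_
  · rw [hπp]; exact Fin.lt_def.2 (Nat.pos_of_ne_zero hfirst)
  · exact apply_lt_apply_of_lt_of_le hi hi0 (by simp only [last]; omega)
  · rw [hπq]; exact Fin.lt_def.2 (lt_of_le_of_ne (Nat.le_sub_one_of_lt (π last).isLt) hlast)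

end

theorem sum_decomposable_av_2143_3142_246135_first_or_last_fixed
    (n : ℕ) (hn : 2 ≤ n) (π : Equiv.Perm (Fin n))
    (hdec : SumDecomposable π)
    (h1 : Avoids π p2143) :
    (π ⟨0, by omega⟩ : ℕ) = 0 ∨ (π ⟨n - 1, by omega⟩ : ℕ) = n - 1 := by
  exact or_iff_not_and_not.2 fun h => h1 (hdec.contains_p2143 (by omega) h.1 h.2)
end
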